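/- arXiv:1508.00111 — 4 statements merged into one kernel-verified Lean document; each statement's English description precedes it below -/
import Mathlib

section
/- For 1/2 ≤ σ ≤ 1 and y ≥ 3, one has ∑_{p ≤ y, p prime} p^{-σ} ≪ (y^{1-σ} - 1)/((1-σ) log y) + log log y, where the implied constant is absolute and, when σ = 1, the first term is interpreted by continuity as its limit 1 (the quantity (y^{1-σ}-1)/((1-σ) log y) tends to 1 as σ → 1). -/
open Finset

lemma cheb (n : ℕ) : ∑ p ∈ (Finset.range (n+1)).filter Nat.Prime, Real.log p ≤ n * Real.log 4 := by
  have h1 : ∑ p ∈ (Finset.range (n+1)).filter Nat.Prime, Real.log p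
      = Real.log (primorial n) := by
    rw [primorial, Nat.cast_prod, Real.log_prod]
    intro p hp
    simp only [mem_filter, mem_range] at hp
    exact_mod_cast hp.2.pos.ne'
  rw [h1]
  calc Real.log (primorial n) ≤ Real.log ((4:ℕ)^n) := by
        apply Real.log_le_log (by exact_mod_cast (primorial_pos n))
        exact_mod_cast primorial_le_4_pow n
    _ = n * Real.log 4 := by
        push_cast
        rw [Real.log_pow]

lemma blockcard (k : ℕ) (hk : 1 ≤ k) :
    (((Finset.Ioc (2^k) (2^(k+1))).filter Nat.Prime).card : ℝ) ≤ 2^(k+2) / k := by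
  set B := (Finset.Ioc (2^k) (2^(k+1))).filter Nat.Prime with hB
  have h1 : B.card • ((k:ℝ) * Real.log 2) ≤ ∑ p ∈ B, Real.log p := by
    apply Finset.card_nsmul_le_sum
    intro p hp
    simp only [hB, mem_filter, mem_Ioc] at hp
    have : ((2:ℝ))^k ≤ (p:ℝ) := by exact_mod_cast hp.1.1.le
    calc (k:ℝ) * Real.log 2 = Real.log ((2:ℝ)^k) := by rw [Real.log_pow]
      _ ≤ Real.log p := Real.log_le_log (by positivity) this
  have h2 : ∑ p ∈ B, Real.log p ≤ ∑ p ∈ (Finset.range (2^(k+1)+1)).filter Nat.Prime, Real.log p := by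
    apply Finset.sum_le_sum_of_subset_of_nonneg
    · intro p hp
      simp only [hB, mem_filter, mem_Ioc] at hp
      simp only [mem_filter, mem_range]
      exact ⟨Nat.lt_succ_of_le hp.1.2, hp.2⟩
    · intro p hp _
      simp only [mem_filter, mem_range] at hp
      exact Real.log_nonneg (by exact_mod_cast hp.2.one_lt.le)
  have h3 := cheb (2^(k+1))
  have h4 : (B.card : ℝ) * ((k:ℝ) * Real.log 2) ≤ 2^(k+1) * Real.log 4 := by
    rw [nsmul_eq_mul] at h1
    calc (B.card : ℝ) * ((k:ℝ) * Real.log 2) ≤ ∑ p ∈ B, Real.log p := h1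
      _ ≤ _ := h2
      _ ≤ ((2^(k+1) : ℕ) : ℝ) * Real.log 4 := h3
      _ = 2^(k+1) * Real.log 4 := by push_cast; ring
  have hlog4 : Real.log 4 = 2 * Real.log 2 := by
    rw [show (4:ℝ) = 2^2 by norm_num, Real.log_pow]; push_cast; ring
  have hl2 : 0 < Real.log 2 := Real.log_pos (by norm_num)
  have hk' : (0:ℝ) < k := by exact_mod_cast hk
  rw [le_div_iff₀ hk']
  have h5 : ((B.card : ℝ) * k) * Real.log 2 ≤ (2^(k+2)) * Real.log 2 := by
    calc ((B.card : ℝ) * k) * Real.log 2 = (B.card : ℝ) * ((k:ℝ) * Real.log 2) := by ring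
      _ ≤ 2^(k+1) * Real.log 4 := h4
      _ = (2^(k+2)) * Real.log 2 := by rw [hlog4]; ring
  exact le_of_mul_le_mul_right h5 hl2

lemma dyadic (h : ℕ → ℝ) (K : ℕ) :
    ∑ n ∈ Finset.Ioc 1 (2^K), h n = ∑ k ∈ Finset.range K, ∑ n ∈ Finset.Ioc (2^k) (2^(k+1)), h n := by
  induction K with
  | zero => simp
  | succ K ih =>
      rw [Finset.sum_range_succ, ← ih]
      exact (Finset.sum_Ioc_consecutive h (Nat.one_le_two_pow) (Nat.pow_le_pow_right (by norm_num) (Nat.le_succ K))).symm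

lemma blocksum (σ : ℝ) (hσ0 : 0 ≤ σ) (k : ℕ) (hk : 1 ≤ k) :
    ∑ n ∈ Finset.Ioc (2^k : ℕ) (2^(k+1)), (if n.Prime then (n:ℝ)^(-σ) else 0)
      ≤ 4 * (2:ℝ)^((k:ℝ)*(1-σ)) / k := by
  rw [← Finset.sum_filter]
  have hterm : ∀ n ∈ (Finset.Ioc (2^k) (2^(k+1))).filter Nat.Prime,
      (n:ℝ)^(-σ) ≤ ((2:ℝ)^(k:ℕ))^(-σ) := by
    intro n hn
    simp only [mem_filter, mem_Ioc] at hn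
    apply Real.rpow_le_rpow_of_nonpos (by positivity) _ (neg_nonpos.mpr hσ0)
    exact_mod_cast hn.1.1.le
  have h1 := Finset.sum_le_card_nsmul _ _ _ hterm
  rw [nsmul_eq_mul] at h1
  have h2 : (((Finset.Ioc (2^k) (2^(k+1))).filter Nat.Prime).card : ℝ) * ((2:ℝ)^(k:ℕ))^(-σ)
      ≤ (2^(k+2)/k) * ((2:ℝ)^(k:ℕ))^(-σ) := by
    apply mul_le_mul_of_nonneg_right (blockcard k hk) (Real.rpow_nonneg (by positivity) _)
  have h3 : ((2:ℝ)^(k+2)/k) * ((2:ℝ)^(k:ℕ))^(-σ) = 4 * (2:ℝ)^((k:ℝ)*(1-σ)) / k := by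
    rw [← Real.rpow_natCast 2 k, ← Real.rpow_mul (by norm_num), ← Real.rpow_natCast 2 (k+2),
      div_mul_eq_mul_div, ← Real.rpow_add (by norm_num),
      show ((k+2:ℕ):ℝ) + (k:ℝ)*(-σ) = (k:ℝ)*(1-σ) + 2 by push_cast; ring,
      Real.rpow_add (by norm_num),
      show ((2:ℝ)^(2:ℝ)) = 4 by
        rw [show (2:ℝ) = ((2:ℕ):ℝ) by norm_num, Real.rpow_natCast]; norm_num]
    ring
  calc _ ≤ _ := h1
    _ ≤ _ := h2
    _ = _ := h3

lemma primesum (σ : ℝ) (hσ0 : 0 ≤ σ) (K N : ℕ) (hK : 1 ≤ K) (hN : N ≤ 2^K) :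
    ∑ p ∈ (Finset.Icc 1 N).filter Nat.Prime, (p:ℝ)^(-σ)
      ≤ 1 + ∑ k ∈ Finset.Ioc 0 K, 4 * (2:ℝ)^((k:ℝ)*(1-σ)) / k := by
  set h : ℕ → ℝ := fun n => if n.Prime then (n:ℝ)^(-σ) else 0 with hh
  have hnonneg : ∀ n, 0 ≤ h n := by
    intro n
    simp only [hh]
    split
    · exact Real.rpow_nonneg (by positivity) _
    · exact le_refl _
  have step1 : ∑ p ∈ (Finset.Icc 1 N).filter Nat.Prime, (p:ℝ)^(-σ)
      ≤ ∑ n ∈ Finset.Ioc 1 (2^K), h n := by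
    have heq : ∑ p ∈ (Finset.Icc 1 N).filter Nat.Prime, (p:ℝ)^(-σ)
        = ∑ p ∈ (Finset.Icc 1 N).filter Nat.Prime, h p := by
      apply Finset.sum_congr rfl
      intro p hp
      simp only [mem_filter] at hp
      simp only [hh, if_pos hp.2]
    rw [heq]
    apply Finset.sum_le_sum_of_subset_of_nonneg
    · intro n hn
      simp only [mem_filter, mem_Icc] at hn
      simp only [mem_Ioc]
      exact ⟨hn.2.one_lt, le_trans hn.1.2 hN⟩
    · intro n _ _; exact hnonneg n
  have step2 : ∑ n ∈ Finset.Ioc 1 (2^K), h n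
      ≤ 1 + ∑ k ∈ Finset.Ioc 0 K, 4 * (2:ℝ)^((k:ℝ)*(1-σ)) / k := by
    rw [dyadic h K]
    have h0mem : 0 ∈ Finset.range K := Finset.mem_range.mpr hK
    rw [← Finset.add_sum_erase _ _ h0mem]
    have hblock0 : ∑ n ∈ Finset.Ioc (2^0) (2^(0+1)), h n ≤ 1 := by
      norm_num
      show h 2 ≤ 1
      simp only [hh, if_pos Nat.prime_two]
      apply Real.rpow_le_one_of_one_le_of_nonpos (by norm_num) (by linarith)
    have hrest : ∑ k ∈ (Finset.range K).erase 0, ∑ n ∈ Finset.Ioc (2^k) (2^(k+1)), h n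
        ≤ ∑ k ∈ Finset.Ioc 0 K, 4 * (2:ℝ)^((k:ℝ)*(1-σ)) / k := by
      calc ∑ k ∈ (Finset.range K).erase 0, ∑ n ∈ Finset.Ioc (2^k) (2^(k+1)), h n
          ≤ ∑ k ∈ (Finset.range K).erase 0, 4 * (2:ℝ)^((k:ℝ)*(1-σ)) / k := by
            apply Finset.sum_le_sum
            intro k hk
            simp only [Finset.mem_erase, Finset.mem_range] at hk
            exact blocksum σ hσ0 k (Nat.one_le_iff_ne_zero.mpr hk.1)
        _ ≤ ∑ k ∈ Finset.Ioc 0 K, 4 * (2:ℝ)^((k:ℝ)*(1-σ)) / k := by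
            apply Finset.sum_le_sum_of_subset_of_nonneg
            · intro k hk
              simp only [Finset.mem_erase, Finset.mem_range] at hk
              simp only [mem_Ioc]
              exact ⟨Nat.pos_of_ne_zero hk.1, hk.2.le⟩
            · intro k _ _
              positivity
    exact add_le_add hblock0 hrest
  linarith

lemma harm (n : ℕ) : ∑ k ∈ Finset.Ioc 0 n, 1/(k:ℝ) ≤ 1 + Real.log n := by
  have h1 : ∑ k ∈ Finset.Ioc 0 n, 1/(k:ℝ) = (harmonic n : ℝ) := by
    rw [harmonic_eq_sum_Icc]
    push_cast
    rw [show Finset.Icc 1 n = Finset.Ioc 0 n from rfl]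
    simp [one_div]
  rw [h1]
  exact harmonic_le_one_add_log n

lemma two_rpow_le_four {x : ℝ} (hx : x ≤ 2) : (2:ℝ)^x ≤ 4 := by
  calc (2:ℝ)^x ≤ (2:ℝ)^(2:ℝ) := Real.rpow_le_rpow_of_exponent_le (by norm_num) hx
    _ = 4 := by
      rw [show (2:ℝ) = ((2:ℕ):ℝ) by norm_num, Real.rpow_natCast]; norm_num

set_option maxHeartbeats 2000000 in
lemma partB (t L : ℝ) (K M : ℕ) (htpos : 0 < t) (ht : t ≤ 1/2) (hL1 : 1 ≤ L)
    (hcase : 1 < t * L) (hKL : L ≤ (K:ℝ) * Real.log 2)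
    (hK2 : (K:ℝ) ≤ L / Real.log 2 + 1)
    (hM_ge : 1/t ≤ (M:ℝ)) (hMK : M ≤ K) :
    ∑ k ∈ Finset.Ioc M K, 4 * (2:ℝ)^((k:ℝ)*t) / k
      ≤ 648 * ((Real.exp (t*L) - 1)/(t*L)) := by
  have hlog2_gt : (0.6931:ℝ) < Real.log 2 := lt_trans (by norm_num) Real.log_two_gt_d9
  have hlog2_lt : Real.log 2 < 0.6932 := lt_trans Real.log_two_lt_d9 (by norm_num)
  have htL : (0:ℝ) < t * L := by positivity
  set X := Real.exp (t*L) with hX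
  have hexp2 : 2 ≤ X := by
    rw [hX]
    calc (2:ℝ) ≤ Real.exp 1 := by linarith [Real.exp_one_gt_d9]
      _ ≤ Real.exp (t*L) := Real.exp_le_exp.mpr (by linarith)
  have hXpos : 0 < X := Real.exp_pos _
  set F := (X - 1)/(t*L) with hF
  have hF_ge : X / (2*(t*L)) ≤ F := by
    rw [hF, div_le_div_iff₀ (by positivity) htL]
    nlinarith [mul_nonneg htL.le (by linarith : (0:ℝ) ≤ X - 2)]
  have hK0 : 0 < K := by
    rcases Nat.eq_zero_or_pos K with h|h
    · exfalso; rw [h] at hKL; push_cast at hKL; linarith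
    · exact h
  have hKpos : (0:ℝ) < K := by exact_mod_cast hK0
  set u := t * (K:ℝ) with hu
  have hu_pos : 0 < u := by positivity
  have hLK : L ≤ (K:ℝ) := by nlinarith
  have h_tL_le_u : t * L ≤ u := by nlinarith
  have h_u_le : u ≤ 2 * (t*L) := by
    have h2 : t * (L / Real.log 2) ≤ (t*L) / 0.6931 := by
      rw [mul_div_assoc']
      apply div_le_div₀ (by positivity) (le_refl _) (by norm_num) (by linarith)
    have h3 : (t*L)/0.6931 ≤ 1.45 * (t*L) := by
      rw [div_le_iff₀ (by norm_num)]
      nlinarith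
    have h4 : t * (K:ℝ) ≤ t * (L / Real.log 2 + 1) := by nlinarith
    nlinarith
  -- the exponential bounds
  have hrpow_exp : ∀ x : ℝ, (2:ℝ)^x = Real.exp (Real.log 2 * x) := by
    intro x; rw [Real.rpow_def_of_pos (by norm_num)]
  -- per-term bound
  have hterm : ∀ k ∈ Finset.Ioc M K, 4 * (2:ℝ)^((k:ℝ)*t) / k
      ≤ 4 * t * (2:ℝ)^(u/2) + (8/(K:ℝ)) * (2:ℝ)^((k:ℝ)*t) := by
    intro k hk
    simp only [mem_Ioc] at hk
    have hkM : (M:ℝ) < k := by exact_mod_cast hk.1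
    have hkK : (k:ℝ) ≤ K := by exact_mod_cast hk.2
    have hkpos : (0:ℝ) < k := lt_of_le_of_lt (by positivity) (lt_of_le_of_lt hM_ge hkM)
    have hkt : 1 ≤ t * k := by
      have : 1/t < (k:ℝ) := lt_of_le_of_lt hM_ge hkM
      rw [div_lt_iff₀ htpos] at this
      nlinarith
    have h2nn : (0:ℝ) ≤ (2:ℝ)^((k:ℝ)*t) := Real.rpow_nonneg (by norm_num) _
    have h2nnu : (0:ℝ) ≤ (2:ℝ)^(u/2) := Real.rpow_nonneg (by norm_num) _
    rcases le_or_gt ((k:ℝ)) ((K:ℝ)/2) with h|h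
    · have hle : (2:ℝ)^((k:ℝ)*t) ≤ (2:ℝ)^(u/2) := by
        apply Real.rpow_le_rpow_of_exponent_le (by norm_num)
        nlinarith
      have h1 : 4 * (2:ℝ)^((k:ℝ)*t) / k ≤ 4 * t * (2:ℝ)^(u/2) := by
        rw [div_le_iff₀ hkpos]
        calc 4 * (2:ℝ)^((k:ℝ)*t) = 4 * (2:ℝ)^((k:ℝ)*t) * 1 := by ring
          _ ≤ 4 * (2:ℝ)^(u/2) * (t * k) := by nlinarith
          _ = 4 * t * (2:ℝ)^(u/2) * k := by ring
      have h2 : 0 ≤ (8/(K:ℝ)) * (2:ℝ)^((k:ℝ)*t) := by positivity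
      linarith
    · have h1 : 4 * (2:ℝ)^((k:ℝ)*t) / k ≤ (8/(K:ℝ)) * (2:ℝ)^((k:ℝ)*t) := by
        rw [div_le_iff₀ hkpos]
        have : (8/(K:ℝ)) * (2:ℝ)^((k:ℝ)*t) * k = (2:ℝ)^((k:ℝ)*t) * (8 * k / K) := by
          field_simp
        rw [this]
        have h8 : (4:ℝ) ≤ 8 * k / K := by
          rw [le_div_iff₀ hKpos]
          nlinarith
        nlinarith
      have h2 : 0 ≤ 4 * t * (2:ℝ)^(u/2) := by positivity
      linarith
  -- sum the bound
  have hsum1 : ∑ k ∈ Finset.Ioc M K, 4 * (2:ℝ)^((k:ℝ)*t) / k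
      ≤ (K:ℝ) * (4 * t * (2:ℝ)^(u/2)) + (8/(K:ℝ)) * ∑ k ∈ Finset.Ioc M K, (2:ℝ)^((k:ℝ)*t) := by
    calc ∑ k ∈ Finset.Ioc M K, 4 * (2:ℝ)^((k:ℝ)*t) / k
        ≤ ∑ k ∈ Finset.Ioc M K, (4 * t * (2:ℝ)^(u/2) + (8/(K:ℝ)) * (2:ℝ)^((k:ℝ)*t)) :=
          Finset.sum_le_sum hterm
      _ = (Finset.Ioc M K).card * (4 * t * (2:ℝ)^(u/2))
            + (8/(K:ℝ)) * ∑ k ∈ Finset.Ioc M K, (2:ℝ)^((k:ℝ)*t) := by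
          rw [Finset.sum_add_distrib, Finset.sum_const, nsmul_eq_mul, Finset.mul_sum]
      _ ≤ _ := by
          have hcard : ((Finset.Ioc M K).card : ℝ) ≤ K := by
            rw [Nat.card_Ioc]
            exact_mod_cast Nat.sub_le K M
          have : (0:ℝ) ≤ 4 * t * (2:ℝ)^(u/2) := by positivity
          nlinarith
  set G := ∑ k ∈ Finset.Ioc M K, (2:ℝ)^((k:ℝ)*t) with hG
  -- geometric sum bound on G
  have hak : ∀ k : ℕ, (2:ℝ)^((k:ℝ)*t) = ((2:ℝ)^t)^k := by
    intro k
    rw [← Real.rpow_natCast ((2:ℝ)^t) k, ← Real.rpow_mul (by norm_num : (0:ℝ) ≤ 2), mul_comm]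
  set a := (2:ℝ)^t with ha
  have ha0 : 0 < a := Real.rpow_pos_of_pos (by norm_num) _
  have ha1 : 1 < a := by
    rw [ha]
    exact Real.one_lt_rpow_iff_of_pos (by norm_num) |>.mpr (Or.inl ⟨by norm_num, htpos⟩)
  have ha_sub : t * Real.log 2 ≤ a - 1 := by
    have := Real.add_one_le_exp (Real.log 2 * t)
    rw [ha, hrpow_exp t]
    linarith
  have htop : a^(K+1) ≤ 3 * X := by
    have e1 : a^(K+1) = Real.exp (((K:ℝ)+1) * (Real.log 2 * t)) := by
      rw [ha, hrpow_exp t, ← Real.exp_nat_mul]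
      push_cast
      ring_nf
    have e2 : ((K:ℝ)+1) * (Real.log 2 * t) ≤ t*L + 1 := by
      have h1 : (K:ℝ) * Real.log 2 ≤ L + Real.log 2 := by
        have := mul_le_mul_of_nonneg_right hK2 (le_of_lt (by linarith : (0:ℝ) < Real.log 2))
        rwa [add_mul, div_mul_cancel₀ _ (by linarith : Real.log 2 ≠ 0), one_mul] at this
      nlinarith
    have e3 : Real.exp (((K:ℝ)+1) * (Real.log 2 * t)) ≤ Real.exp (t*L+1) :=
      Real.exp_le_exp.mpr e2
    have e4 : Real.exp (t*L+1) = X * Real.exp 1 := by rw [hX, ← Real.exp_add]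
    have e5 : Real.exp 1 ≤ 3 := by linarith [Real.exp_one_lt_d9]
    calc a^(K+1) = Real.exp (((K:ℝ)+1) * (Real.log 2 * t)) := e1
      _ ≤ Real.exp (t*L+1) := e3
      _ = X * Real.exp 1 := e4
      _ ≤ 3 * X := by nlinarith
  have hGfinal : G ≤ 3*X/(t*Real.log 2) := by
    have g1 : G ≤ ∑ k ∈ Finset.range (K+1), a^k := by
      rw [hG]
      calc ∑ k ∈ Finset.Ioc M K, (2:ℝ)^((k:ℝ)*t) = ∑ k ∈ Finset.Ioc M K, a^k :=
            Finset.sum_congr rfl (fun k _ => hak k)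
        _ ≤ ∑ k ∈ Finset.range (K+1), a^k := by
            apply Finset.sum_le_sum_of_subset_of_nonneg
            · intro k hk
              simp only [mem_Ioc] at hk
              exact Finset.mem_range.mpr (Nat.lt_succ_of_le hk.2)
            · intro k _ _
              positivity
    have g2 : ∑ k ∈ Finset.range (K+1), a^k = (a^(K+1) - 1)/(a - 1) := geom_sum_eq ha1.ne' (K+1)
    have g3 : (a^(K+1) - 1)/(a - 1) ≤ 3*X/(t*Real.log 2) := by
      apply div_le_div₀ (by positivity) (by linarith) (by positivity) ha_sub
    linarith
  -- piece 2
  have piece2 : (8/(K:ℝ)) * G ≤ 48 * F := by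
    have e1 : (8/(K:ℝ)) * G ≤ (8/(K:ℝ)) * (3*X/(t*Real.log 2)) :=
      mul_le_mul_of_nonneg_left hGfinal (by positivity)
    have e2 : (8/(K:ℝ)) * (3*X/(t*Real.log 2)) = 24*X/((K:ℝ)*(t*Real.log 2)) := by
      field_simp
      ring
    have e3 : 24*X/((K:ℝ)*(t*Real.log 2)) ≤ 24*X/(t*L) := by
      apply div_le_div_of_nonneg_left (by positivity) htL
      nlinarith
    have e4 : 24*X/(t*L) = 48*(X/(2*(t*L))) := by ring
    have e5 : 48*(X/(2*(t*L))) ≤ 48*F := by linarith [hF_ge]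
    linarith
  -- piece 1
  have h2u_nn : (0:ℝ) ≤ (2:ℝ)^(u/2) := Real.rpow_nonneg (by norm_num) _
  have key : 8*u^2*(2:ℝ)^(u/2) ≤ 600*Real.exp (u/2) := by
    have l1 : 1 + 0.0375*u ≤ Real.exp (0.0375*u) := by
      have := Real.add_one_le_exp (0.0375*u)
      linarith
    have l2 : Real.exp (0.15*u) = (Real.exp (0.0375*u))^(4:ℕ) := by
      rw [← Real.exp_nat_mul]
      congr 1
      push_cast
      ring
    have l3 : u^2 ≤ 75*Real.exp (0.15*u) := by
      have h0 : (0:ℝ) ≤ 1 + 0.0375*u := by linarith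
      have hp : (1 + 0.0375*u)^(4:ℕ) ≤ (Real.exp (0.0375*u))^(4:ℕ) := pow_le_pow_left₀ h0 l1 4
      have hw : u ≤ 8.6 * (1 + 0.0375*u)^2 := by nlinarith [sq_nonneg (u - 14.7)]
      have hq : u^2 ≤ 74 * ((1 + 0.0375*u)^2)^2 := by nlinarith [sq_nonneg (1 + 0.0375*u), hu_pos]
      have : ((1 + 0.0375*u)^2)^2 = (1 + 0.0375*u)^(4:ℕ) := by ring
      nlinarith [hp, hq, pow_nonneg h0 4]
    have l4 : (2:ℝ)^(u/2) = Real.exp (Real.log 2 * (u/2)) := hrpow_exp _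
    have l5 : Real.exp (0.15*u) * Real.exp (Real.log 2 * (u/2)) ≤ Real.exp (u/2) := by
      rw [← Real.exp_add]
      apply Real.exp_le_exp.mpr
      nlinarith
    calc 8*u^2*(2:ℝ)^(u/2) = 8*u^2*Real.exp (Real.log 2 * (u/2)) := by rw [l4]
      _ ≤ 8*(75*Real.exp (0.15*u))*Real.exp (Real.log 2 * (u/2)) := by
          have := Real.exp_nonneg (Real.log 2 * (u/2))
          nlinarith [l3]
      _ = 600*(Real.exp (0.15*u) * Real.exp (Real.log 2 * (u/2))) := by ring
      _ ≤ 600*Real.exp (u/2) := by nlinarith [l5]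
  have piece1 : (K:ℝ) * (4 * t * (2:ℝ)^(u/2)) ≤ 600 * F := by
    have e0 : (K:ℝ) * (4 * t * (2:ℝ)^(u/2)) = 4*u*(2:ℝ)^(u/2) := by rw [hu]; ring
    have p1 : 4*u*(2:ℝ)^(u/2) ≤ 600*Real.exp (u/2)/(2*u) := by
      rw [le_div_iff₀ (by positivity)]
      nlinarith [key]
    have p2 : 600*Real.exp (u/2)/(2*u) ≤ 600*X/(2*(t*L)) := by
      apply div_le_div₀ (by positivity) ?_ (by positivity) (by linarith)
      have : Real.exp (u/2) ≤ X := by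
        rw [hX]
        apply Real.exp_le_exp.mpr
        linarith
      linarith
    have p3 : 600*X/(2*(t*L)) = 600*(X/(2*(t*L))) := by ring
    have p4 : 600*(X/(2*(t*L))) ≤ 600*F := by linarith [hF_ge]
    linarith [e0.le, e0.ge]
  calc ∑ k ∈ Finset.Ioc M K, 4 * (2:ℝ)^((k:ℝ)*t) / k
      ≤ (K:ℝ) * (4 * t * (2:ℝ)^(u/2)) + (8/(K:ℝ)) * G := hsum1
    _ ≤ 600 * F + 48 * F := add_le_add piece1 piece2
    _ = 648 * F := by ring

set_option maxHeartbeats 2000000 in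
lemma analytic (t L : ℝ) (K : ℕ) (ht0 : 0 ≤ t) (ht : t ≤ 1/2) (hL : Real.log 3 ≤ L)
    (hK1 : L / Real.log 2 ≤ (K:ℝ)) (hK2 : (K:ℝ) ≤ L / Real.log 2 + 1) :
    ∑ k ∈ Finset.Ioc 0 K, 4 * (2:ℝ)^((k:ℝ)*t) / k
      ≤ 800 * ((if t = 0 then 1 else (Real.exp (t*L) - 1)/(t*L)) + Real.log L) := by
  set E : ℝ := if t = 0 then 1 else (Real.exp (t*L) - 1)/(t*L) with hE
  have hlog2_gt : (0.6931:ℝ) < Real.log 2 := lt_trans (by norm_num) Real.log_two_gt_d9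
  have hlog2_lt : Real.log 2 < 0.6932 := lt_trans Real.log_two_lt_d9 (by norm_num)
  have hL1 : (1:ℝ) ≤ L := by
    refine le_trans ?_ hL
    rw [Real.le_log_iff_exp_le (by norm_num)]
    exact le_trans Real.exp_one_lt_d9.le (by norm_num)
  have hlogL0 : 0 ≤ Real.log L := Real.log_nonneg hL1
  have hE1 : (1:ℝ) ≤ E := by
    rw [hE]
    split_ifs with h
    · exact le_refl 1
    · have htpos : 0 < t := lt_of_le_of_ne ht0 (Ne.symm h)
      have hx : 0 < t * L := by positivity
      rw [le_div_iff₀ hx]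
      nlinarith [Real.add_one_le_exp (t*L)]
  have hKL : L ≤ (K:ℝ) * Real.log 2 := by
    rw [div_le_iff₀ (by linarith)] at hK1
    linarith
  have hK0 : 0 < K := by
    rcases Nat.eq_zero_or_pos K with h|h
    · exfalso
      rw [h] at hK1
      push_cast at hK1
      have : 0 < L / Real.log 2 := div_pos (by linarith) (by linarith)
      linarith
    · exact h
  -- bound on log K
  have hlogK : Real.log K ≤ 1.4 + Real.log L := by
    have h1 : (K:ℝ) ≤ 4 * L := by
      have h2 : L / Real.log 2 ≤ L / 0.6931 := by
        apply div_le_div_of_nonneg_left (by linarith) (by norm_num) (by linarith)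
      have h3 : L / 0.6931 ≤ 1.45 * L := by
        rw [div_le_iff₀ (by norm_num)]
        nlinarith
      linarith
    calc Real.log K ≤ Real.log (4*L) := by
          apply Real.log_le_log (by exact_mod_cast hK0) h1
      _ = Real.log 4 + Real.log L := Real.log_mul (by norm_num) (by linarith)
      _ ≤ 1.4 + Real.log L := by
          have : Real.log 4 = 2 * Real.log 2 := by
            rw [show (4:ℝ) = 2^2 by norm_num, Real.log_pow]; push_cast; ring
          linarith
  by_cases hcase : t * L ≤ 1
  · -- easy case
    have hterm : ∀ k ∈ Finset.Ioc 0 K, 4 * (2:ℝ)^((k:ℝ)*t) / k ≤ 16 * (1/(k:ℝ)) := by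
      intro k hk
      simp only [mem_Ioc] at hk
      have hkpos : (0:ℝ) < k := by exact_mod_cast hk.1
      have hkt : (k:ℝ) * t ≤ 2 := by
        have hkK : (k:ℝ) ≤ K := by exact_mod_cast hk.2
        have h2 : (k:ℝ) * t ≤ (K:ℝ) * t := by nlinarith
        have h3 : (K:ℝ) * t ≤ (L / Real.log 2 + 1) * t := by nlinarith
        have h4 : (L / Real.log 2) * t = (t * L) / Real.log 2 := by ring
        have h5 : (t*L)/Real.log 2 ≤ 1/0.6931 := by
          apply div_le_div₀ (by norm_num) hcase (by norm_num) (by linarith)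
        nlinarith
      have := two_rpow_le_four hkt
      rw [div_le_iff₀ hkpos]
      have h2nn : (0:ℝ) ≤ (2:ℝ)^((k:ℝ)*t) := Real.rpow_nonneg (by norm_num) _
      have heq : 16 * (1/(k:ℝ)) * k = 16 := by field_simp
      rw [heq]
      nlinarith
    calc ∑ k ∈ Finset.Ioc 0 K, 4 * (2:ℝ)^((k:ℝ)*t) / k
        ≤ ∑ k ∈ Finset.Ioc 0 K, 16 * (1/(k:ℝ)) := Finset.sum_le_sum hterm
      _ = 16 * ∑ k ∈ Finset.Ioc 0 K, 1/(k:ℝ) := by rw [Finset.mul_sum]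
      _ ≤ 16 * (1 + Real.log K) := by linarith [harm K]
      _ ≤ 16 * (2.4 + Real.log L) := by linarith [hlogK]
      _ ≤ 800 * (E + Real.log L) := by linarith [hE1, hlogL0]
  · push_neg at hcase
    have htpos : 0 < t := by
      rcases lt_or_eq_of_le ht0 with h|h
      · exact h
      · exfalso; rw [← h] at hcase; simp at hcase; linarith
    have htL : (0:ℝ) < t * L := by positivity
    have hEdef : E = (Real.exp (t*L) - 1)/(t*L) := by
      rw [hE, if_neg htpos.ne']
    have hexp2 : 2 ≤ Real.exp (t*L) := by
      calc (2:ℝ) ≤ Real.exp 1 := by linarith [Real.exp_one_gt_d9]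
        _ ≤ Real.exp (t*L) := Real.exp_le_exp.mpr (by linarith)
    have hXpos : 0 < Real.exp (t*L) := Real.exp_pos _
    have hE_ge : Real.exp (t*L) / (2*(t*L)) ≤ E := by
      rw [hEdef, div_le_div_iff₀ (by positivity) htL]
      nlinarith [mul_nonneg htL.le (by linarith : (0:ℝ) ≤ Real.exp (t*L) - 2)]
    set u := t * (K:ℝ) with hu
    have hLK : L ≤ (K:ℝ) := by nlinarith [hKL, (Nat.cast_nonneg K : (0:ℝ) ≤ K)]
    have hu_pos : 0 < u := by
      have : (0:ℝ) < K := by linarith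
      positivity
    have h_tL_le_u : t * L ≤ u := by nlinarith
    have h_u_le : u ≤ 2 * (t*L) := by
      have h2 : t * (L / Real.log 2) ≤ (t*L) / 0.6931 := by
        rw [mul_div_assoc']
        apply div_le_div₀ (by positivity) (le_refl _) (by norm_num) (by linarith)
      have h3 : (t*L)/0.6931 ≤ 1.45 * (t*L) := by
        rw [div_le_iff₀ (by norm_num)]
        nlinarith
      have h4 : t * (K:ℝ) ≤ t * (L / Real.log 2 + 1) := by nlinarith
      nlinarith
    set M := ⌈1/t⌉₊ with hM
    have hM_ge : 1/t ≤ (M:ℝ) := Nat.le_ceil _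
    have hM_le : (M:ℝ) ≤ 1/t + 1 := (Nat.ceil_lt_add_one (by positivity)).le
    have h1t : 1/t < L := by
      rw [div_lt_iff₀ htpos]
      nlinarith
    have hM0 : 0 < M := by
      have h1 : (0:ℝ) < 1/t := by positivity
      have : (0:ℝ) < (M:ℝ) := lt_of_lt_of_le h1 hM_ge
      exact_mod_cast this
    have hMK : M ≤ K := by
      rw [hM, Nat.ceil_le]
      linarith
    rw [← Finset.sum_Ioc_consecutive _ (Nat.zero_le M) hMK]
    -- Part A
    have hlogM : Real.log M ≤ 0.7 + Real.log L := by
      have h1 : (M:ℝ) ≤ 2 * L := by linarith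
      calc Real.log M ≤ Real.log (2*L) := by
            apply Real.log_le_log (by exact_mod_cast hM0) h1
        _ = Real.log 2 + Real.log L := Real.log_mul (by norm_num) (by linarith)
        _ ≤ 0.7 + Real.log L := by linarith
    have hA : ∑ k ∈ Finset.Ioc 0 M, 4 * (2:ℝ)^((k:ℝ)*t) / k ≤ 28 * E + 16 * Real.log L := by
      have hterm : ∀ k ∈ Finset.Ioc 0 M, 4 * (2:ℝ)^((k:ℝ)*t) / k ≤ 16 * (1/(k:ℝ)) := by
        intro k hk
        simp only [mem_Ioc] at hk
        have hkpos : (0:ℝ) < k := by exact_mod_cast hk.1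
        have hkt : (k:ℝ) * t ≤ 2 := by
          have hkM : (k:ℝ) ≤ M := by exact_mod_cast hk.2
          have h2 : (k:ℝ) * t ≤ (M:ℝ) * t := by nlinarith
          have h3 : (M:ℝ) * t ≤ (1/t + 1) * t := by nlinarith
          have h4 : (1/t + 1) * t = 1 + t := by field_simp
          nlinarith
        have h2b := two_rpow_le_four hkt
        have h2nn : (0:ℝ) ≤ (2:ℝ)^((k:ℝ)*t) := Real.rpow_nonneg (by norm_num) _
        rw [div_le_iff₀ hkpos]
        have heq : 16 * (1/(k:ℝ)) * k = 16 := by field_simp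
        rw [heq]
        nlinarith
      calc ∑ k ∈ Finset.Ioc 0 M, 4 * (2:ℝ)^((k:ℝ)*t) / k
          ≤ ∑ k ∈ Finset.Ioc 0 M, 16 * (1/(k:ℝ)) := Finset.sum_le_sum hterm
        _ = 16 * ∑ k ∈ Finset.Ioc 0 M, 1/(k:ℝ) := by rw [Finset.mul_sum]
        _ ≤ 16 * (1 + Real.log M) := by linarith [harm M]
        _ ≤ 16 * (1.7 + Real.log L) := by linarith [hlogM]
        _ ≤ 28 * E + 16 * Real.log L := by linarith [hE1]
    -- Part B
    have hB : ∑ k ∈ Finset.Ioc M K, 4 * (2:ℝ)^((k:ℝ)*t) / k ≤ 648 * E := by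
      rw [hEdef]
      exact partB t L K M htpos ht hL1 hcase hKL hK2 hM_ge hMK
    linarith [hA, hB, hlogL0, hE1]



/-- There is an absolute constant `C` such that for all `σ ∈ [1/2, 1]` and `y ≥ 3`,
`∑_{p ≤ y, p prime} p^{-σ} ≤ C·((y^{1-σ}-1)/((1-σ) log y) + log log y)`, with the
convention that `(y^{1-σ}-1)/(1-σ) = log y` when `σ = 1`. -/
theorem prime_sum_rpow_bound :
    ∃ C : ℝ, 0 < C ∧ ∀ σ y : ℝ, 1 / 2 ≤ σ → σ ≤ 1 → 3 ≤ y →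
      (∑ p ∈ (Finset.Icc 1 ⌊y⌋₊).filter Nat.Prime, (p : ℝ) ^ (-σ))
        ≤ C * ((if σ = 1 then 1 else (y ^ (1 - σ) - 1) / ((1 - σ) * Real.log y))
            + Real.log (Real.log y)) := by
  refine ⟨1000, by norm_num, ?_⟩
  intro σ y hσlow hσ1 hy3
  have hy0 : (0:ℝ) < y := by linarith
  set L := Real.log y with hLdef
  set t := 1 - σ with htdef
  have hL : Real.log 3 ≤ L := Real.log_le_log (by norm_num) hy3
  have hL1 : (1:ℝ) ≤ L := by
    refine le_trans ?_ hL
    rw [Real.le_log_iff_exp_le (by norm_num)]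
    exact le_trans Real.exp_one_lt_d9.le (by norm_num)
  have hlog2pos : (0:ℝ) < Real.log 2 := Real.log_pos (by norm_num)
  set K := ⌈Real.logb 2 y⌉₊ with hKdef
  have hlogb : Real.logb 2 y = L / Real.log 2 := by rw [Real.logb, hLdef]
  have hK1 : L / Real.log 2 ≤ (K:ℝ) := by rw [← hlogb]; exact Nat.le_ceil _
  have hK2 : (K:ℝ) ≤ L / Real.log 2 + 1 := by
    rw [← hlogb]
    refine (Nat.ceil_lt_add_one ?_).le
    rw [hlogb]
    positivity
  have hKpos : 1 ≤ K := by
    have h1 : (0:ℝ) < L / Real.log 2 := by positivity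
    rcases Nat.eq_zero_or_pos K with h|h
    · exfalso; rw [h] at hK1; push_cast at hK1; linarith
    · exact h
  have hN : ⌊y⌋₊ ≤ 2^K := by
    have h2K : y ≤ ((2^K : ℕ) : ℝ) := by
      have e1 : Real.log (((2:ℕ)^K : ℕ) : ℝ) = K * Real.log 2 := by
        push_cast
        rw [Real.log_pow]
      have e2 : L ≤ (K:ℝ) * Real.log 2 := by
        rw [div_le_iff₀ hlog2pos] at hK1
        linarith
      calc y = Real.exp L := by rw [hLdef, Real.exp_log hy0]
        _ ≤ Real.exp ((K:ℝ) * Real.log 2) := Real.exp_le_exp.mpr e2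
        _ = ((2^K : ℕ) : ℝ) := by rw [← e1, Real.exp_log (by positivity)]
    calc ⌊y⌋₊ ≤ ⌊((2^K : ℕ) : ℝ)⌋₊ := Nat.floor_le_floor h2K
      _ = 2^K := Nat.floor_natCast _
  have step1 := primesum σ (by linarith) K ⌊y⌋₊ hKpos hN
  have step2 := analytic t L K (by linarith) (by linarith) hL hK1 hK2
  have hif : (if t = 0 then (1:ℝ) else (Real.exp (t*L) - 1)/(t*L))
      = (if σ = 1 then (1:ℝ) else (y ^ (1 - σ) - 1) / ((1 - σ) * Real.log y)) := by
    by_cases h : σ = 1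
    · rw [if_pos h, if_pos (by rw [htdef, h]; ring)]
    · rw [if_neg h, if_neg (by rw [htdef]; intro hc; apply h; linarith)]
      have : y ^ (1 - σ) = Real.exp (t * L) := by
        rw [Real.rpow_def_of_pos hy0, htdef, hLdef, mul_comm]
      rw [this, htdef, hLdef]
  set E := (if σ = 1 then (1:ℝ) else (y ^ (1 - σ) - 1) / ((1 - σ) * Real.log y)) with hE
  have hE1 : (1:ℝ) ≤ E := by
    rw [hE]
    split_ifs with h
    · exact le_refl 1
    · have htpos : 0 < t := by
        rw [htdef]
        rcases lt_or_eq_of_le hσ1 with h'|h'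
        · linarith
        · exact absurd h' h
      have hx : (0:ℝ) < (1-σ) * Real.log y := by
        rw [← htdef, ← hLdef]; positivity
      rw [le_div_iff₀ hx]
      have : y ^ (1 - σ) = Real.exp ((1-σ) * Real.log y) := by
        rw [Real.rpow_def_of_pos hy0, mul_comm]
      rw [this]
      nlinarith [Real.add_one_le_exp ((1-σ) * Real.log y)]
  have hlogL0 : 0 ≤ Real.log L := Real.log_nonneg hL1
  rw [hif] at step2
  rw [← htdef] at step1
  linarith [step1, step2]
end

section
/- Let T ≥ 3 and 1/2 ≤ σ ≤ 1. Then ∑_{p > T, p prime} p^{-σ} e^{-p/T} ≪ (T^{1-σ} - 1)/((1-σ) log T) + log log T, with an absolute implied constant (and the convention (T^{1-σ}-1)/(1-σ) = log T at σ = 1). -/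
open Finset Real

/-!
For `p > T` we have `p^{-σ} ≤ T^{-σ}` and `1 ≤ log p / log T`, so the sum is at most
`T^{-σ} / log T · ∑_p log p · e^{-p/T}`. Summing by parts against the geometric weights
`r^n = e^{-n/T}`, Chebyshev's bound `θ(x) ≤ x log 4` gives
`∑_p log p · r^p ≤ log 4 · r / (1 - r) ≤ log 4 · T`. Hence the sum is at most
`log 4 · T^{1-σ} / log T`, which is at most `2 log 4` times the main term because
`T^{1-σ} - 1 ≥ (1 - σ) log T`.
-/

section AbelSummation

variable {a : ℕ → ℝ} {c r : ℝ}

theorem summable_mul_pow_of_sum_range_le (ha : ∀ n, 0 ≤ a n)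
    (hsum : ∀ n, ∑ k ∈ range (n + 1), a k ≤ c * n) (hr0 : 0 ≤ r) (hr1 : r < 1) :
    Summable fun n ↦ a n * r ^ n := by
  have hr : ‖r‖ < 1 := by rwa [norm_of_nonneg hr0]
  refine .of_nonneg_of_le (fun n ↦ mul_nonneg (ha n) (pow_nonneg hr0 n)) (fun n ↦ ?_)
    ((hasSum_coe_mul_geometric_of_norm_lt_one hr).summable.mul_left c)
  have han : a n ≤ c * n :=
    (single_le_sum (fun k _ ↦ ha k) (self_mem_range_succ n)).trans (hsum n)
  calc a n * r ^ n ≤ c * n * r ^ n := by gcongr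
    _ = c * (n * r ^ n) := mul_assoc _ _ _

theorem tsum_mul_pow_le_of_sum_range_le (ha : ∀ n, 0 ≤ a n)
    (hsum : ∀ n, ∑ k ∈ range (n + 1), a k ≤ c * n) (hr0 : 0 ≤ r) (hr1 : r < 1) :
    ∑' n, a n * r ^ n ≤ c * (r / (1 - r)) := by
  have hr : ‖r‖ < 1 := by rwa [norm_of_nonneg hr0]
  have hA := summable_mul_pow_of_sum_range_le ha hsum hr0 hr1
  have hG : Summable fun n ↦ ‖r ^ n‖ := by
    simpa [norm_pow] using summable_geometric_of_lt_one (norm_nonneg r) hr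
  have hA' : Summable fun n ↦ ‖a n * r ^ n‖ :=
    hA.congr fun n ↦ (norm_of_nonneg (mul_nonneg (ha n) (pow_nonneg hr0 n))).symm
  have hcauchy := hasSum_sum_range_mul_of_summable_norm hA' hG
  -- Cauchy product with `∑ r ^ n = (1 - r)⁻¹`: the `n`-th term is `r ^ n ∑_{k ≤ n} a k`.
  rw [tsum_geometric_of_lt_one hr0 hr1] at hcauchy
  have hbound : ∀ n, ∑ k ∈ range (n + 1), a k * r ^ k * r ^ (n - k) ≤ c * (n * r ^ n) := by
    intro n
    calc ∑ k ∈ range (n + 1), a k * r ^ k * r ^ (n - k)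
        = (∑ k ∈ range (n + 1), a k) * r ^ n := by
          rw [sum_mul]
          refine sum_congr rfl fun k hk ↦ ?_
          rw [mul_assoc, pow_mul_pow_sub r (Nat.lt_succ_iff.mp (mem_range.mp hk))]
      _ ≤ c * n * r ^ n := by gcongr; exact hsum n
      _ = c * (n * r ^ n) := mul_assoc _ _ _
  have := hasSum_le hbound hcauchy ((hasSum_coe_mul_geometric_of_norm_lt_one hr).mul_left c)
  have h1r : 0 < 1 - r := by linarith
  rw [mul_inv_le_iff₀ h1r] at this
  calc ∑' n, a n * r ^ n ≤ c * (r / (1 - r) ^ 2) * (1 - r) := this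
    _ = c * (r / (1 - r)) := by field_simp

end AbelSummation

theorem sum_range_succ_ite_prime_log_le (n : ℕ) :
    ∑ k ∈ range (n + 1), (if k.Prime then log k else 0) ≤ log 4 * n := by
  have := Chebyshev.theta_le_log4_mul_x (Nat.cast_nonneg (α := ℝ) n)
  rwa [Chebyshev.theta_eq_sum_Icc, Nat.floor_natCast, sum_filter,
    ← Nat.range_succ_eq_Icc_zero] at this

theorem exp_neg_div_one_sub_exp_neg_le {x : ℝ} (hx : 0 < x) :
    exp (-x) / (1 - exp (-x)) ≤ x⁻¹ := by
  have hx' : x + 1 ≤ exp x := add_one_le_exp x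
  have : exp (-x) / (1 - exp (-x)) = (exp x - 1)⁻¹ := by
    rw [exp_neg]; field_simp
  rw [this]
  exact inv_anti₀ hx (by linarith)

theorem tsum_prime_gt_rpow_neg_mul_exp_le {σ T : ℝ} (hσ : 0 ≤ σ) (hT : 1 < T) :
    ∑' p : {p : ℕ // p.Prime ∧ T < (p : ℝ)}, ((p : ℕ) : ℝ) ^ (-σ) * exp (-((p : ℕ) : ℝ) / T)
      ≤ log 4 * (T ^ (1 - σ) / log T) := by
  have hT0 : 0 < T := by linarith
  have hlogT : 0 < log T := log_pos hT
  set r := exp (-T⁻¹) with hr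
  have hr0 : 0 ≤ r := (exp_pos _).le
  have hr1 : r < 1 := exp_lt_one_iff.mpr (by simpa using hT0)
  have hrT : r / (1 - r) ≤ T := by simpa using exp_neg_div_one_sub_exp_neg_le (inv_pos.mpr hT0)
  set a : ℕ → ℝ := fun n ↦ if n.Prime then log n else 0
  have ha : ∀ n, 0 ≤ a n := fun n ↦ by
    simp only [a]; split_ifs <;> simp [log_natCast_nonneg]
  have hA := summable_mul_pow_of_sum_range_le ha sum_range_succ_ite_prime_log_le hr0 hr1
  set K := T ^ (-σ) / log T
  have hK : 0 ≤ K := by positivity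
  have hterm : ∀ p : {p : ℕ // p.Prime ∧ T < (p : ℝ)},
      ((p : ℕ) : ℝ) ^ (-σ) * exp (-((p : ℕ) : ℝ) / T) ≤ K * (a p * r ^ (p : ℕ)) := by
    rintro ⟨p, hp, hTp⟩
    have hexp : exp (-(p : ℝ) / T) = r ^ p := by
      rw [hr, ← exp_nat_mul]; ring_nf
    have hlog : 1 ≤ log p / log T := by
      rw [one_le_div hlogT]; exact log_le_log hT0 hTp.le
    have hpow : (p : ℝ) ^ (-σ) ≤ T ^ (-σ) := rpow_le_rpow_of_nonpos hT0 hTp.le (by linarith)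
    calc (p : ℝ) ^ (-σ) * exp (-(p : ℝ) / T) ≤ T ^ (-σ) * (log p / log T) * r ^ p := by
          rw [hexp]; gcongr; nlinarith [rpow_nonneg hT0.le (-σ)]
      _ = K * (a p * r ^ p) := by simp only [K, a, if_pos hp]; ring
  have hKA : Summable fun n ↦ K * (a n * r ^ n) := hA.mul_left K
  calc ∑' p : {p : ℕ // p.Prime ∧ T < (p : ℝ)}, ((p : ℕ) : ℝ) ^ (-σ) * exp (-((p : ℕ) : ℝ) / T)
      ≤ ∑' p : {p : ℕ // p.Prime ∧ T < (p : ℝ)}, K * (a p * r ^ (p : ℕ)) :=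
        Summable.tsum_le_tsum hterm
          (.of_nonneg_of_le (fun _ ↦ by positivity) hterm (hKA.subtype _)) (hKA.subtype _)
    _ ≤ ∑' n, K * (a n * r ^ n) :=
        hKA.tsum_subtype_le _ _ fun n ↦ mul_nonneg hK (mul_nonneg (ha n) (pow_nonneg hr0 n))
    _ = K * ∑' n, a n * r ^ n := tsum_mul_left
    _ ≤ K * (log 4 * T) := by
        gcongr
        exact (tsum_mul_pow_le_of_sum_range_le ha sum_range_succ_ite_prime_log_le hr0 hr1).trans
          (by gcongr)
    _ = log 4 * (T ^ (1 - σ) / log T) := by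
        rw [sub_eq_neg_add, rpow_add hT0, rpow_one]; simp only [K]; ring

theorem mul_rpow_le_two_mul_rpow_sub_one {T a : ℝ} (hT : exp 1 ≤ T) (ha0 : 0 ≤ a) (ha1 : a ≤ 1) :
    a * T ^ a ≤ 2 * (T ^ a - 1) := by
  have hT0 : 0 < T := (exp_pos 1).trans_le hT
  have hlogT : 1 ≤ log T := by rwa [le_log_iff_exp_le hT0]
  have hlog : a * log T ≤ T ^ a - 1 := by
    rw [← log_rpow hT0]; exact log_le_sub_one_of_pos (rpow_pos_of_pos hT0 a)
  have hx : 1 ≤ T ^ a := one_le_rpow (by linarith [add_one_le_exp 1]) ha0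
  nlinarith

theorem rpow_one_sub_div_log_le {σ T : ℝ} (hT : exp 1 ≤ T) (hσ0 : 0 ≤ σ) (hσ1 : σ ≤ 1) :
    T ^ (1 - σ) / log T ≤
      2 * (if σ = 1 then 1 else (T ^ (1 - σ) - 1) / ((1 - σ) * log T)) := by
  have hT0 : 0 < T := (exp_pos 1).trans_le hT
  have hlogT : 1 ≤ log T := by rwa [le_log_iff_exp_le hT0]
  split_ifs with hσ
  · rw [hσ, sub_self, rpow_zero]
    linarith [div_le_one_of_le₀ hlogT (by linarith)]
  · have ha : 0 < 1 - σ := sub_pos.mpr (lt_of_le_of_ne hσ1 hσ)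
    rw [mul_div_assoc', div_le_div_iff₀ (by linarith) (by positivity)]
    nlinarith [mul_rpow_le_two_mul_rpow_sub_one hT ha.le (by linarith : 1 - σ ≤ 1)]

/-- There is an absolute constant `C` such that for all `T ≥ 3` and `σ ∈ [1/2, 1]`,
`∑_{p > T, p prime} p^{-σ} e^{-p/T} ≤ C·((T^{1-σ}-1)/((1-σ) log T) + log log T)`,
with the convention `(T^{1-σ}-1)/(1-σ) = log T` when `σ = 1`. -/
theorem prime_tail_sum_exp_weight_bound :
    ∃ C : ℝ, 0 < C ∧ ∀ σ T : ℝ, 1 / 2 ≤ σ → σ ≤ 1 → 3 ≤ T →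
      (∑' p : {p : ℕ // p.Prime ∧ T < (p : ℝ)},
          ((p : ℕ) : ℝ) ^ (-σ) * Real.exp (-(((p : ℕ) : ℝ)) / T))
        ≤ C * ((if σ = 1 then 1 else (T ^ (1 - σ) - 1) / ((1 - σ) * Real.log T))
            + Real.log (Real.log T)) := by
  refine ⟨2 * log 4, by positivity, fun σ T hσ hσ1 hT ↦ ?_⟩
  have hTe : exp 1 ≤ T := by linarith [exp_one_lt_d9]
  have hloglog : 0 ≤ log (log T) :=
    log_nonneg ((le_log_iff_exp_le (by positivity)).mpr hTe)
  have hlog4 : 0 < log 4 := log_pos (by norm_num)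
  calc _ ≤ log 4 * (T ^ (1 - σ) / log T) :=
        tsum_prime_gt_rpow_neg_mul_exp_le (by linarith) (by linarith)
    _ ≤ log 4 * (2 * (if σ = 1 then 1 else (T ^ (1 - σ) - 1) / ((1 - σ) * log T))) := by
        gcongr; exact rpow_one_sub_div_log_le hTe (by linarith) hσ1
    _ ≤ _ := by nlinarith
end

section
/- Let m ≥ 1 be an integer. For each prime p let θ⁻_{m,p} ∈ [0, π] be a point where θ ↦ D(p^{-1}, sym^m[g(θ)]) attains its minimum on [0,π], and let A_m^- := max_{θ∈[0,π]} (−tr(sym^m[g(θ)])). Then −log D(p^{-1}, sym^m[g(θ⁻_{m,p})]) − A_m^- /p = O_m(p^{-2}), i.e. there is a constant C_m such that |−log D(p^{-1}, sym^m[g(θ⁻_{m,p})]) − A_m^- /p| ≤ C_m/p² for all primes p. -/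
open Finset

/-- `tr(sym^m[g(θ)]) = ∑_{j=0}^m cos((m-2j)θ)`. -/
noncomputable def trSym (m : ℕ) (θ : ℝ) : ℝ :=
  ∑ j ∈ Finset.range (m + 1), Real.cos (((m : ℝ) - 2 * (j : ℝ)) * θ)

/-- `D(p⁻¹, sym^m[g(θ)]) = ∏_{j=0}^m (1 - e^{i(m-2j)θ}/p)⁻¹` (a real number for real `θ`,
recorded via its real part). -/
noncomputable def DvalP (m p : ℕ) (θ : ℝ) : ℝ :=
  (∏ j ∈ Finset.range (m + 1),
      (1 - Complex.exp (Complex.I * ((((m : ℝ) - 2 * (j : ℝ)) * θ : ℝ) : ℂ)) * ((p : ℂ))⁻¹)⁻¹).re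

/-- `A_m^- = max_{θ∈[0,π]} (−tr(sym^m[g(θ)]))`. -/
noncomputable def Aminus (m : ℕ) : ℝ :=
  sSup ((fun θ : ℝ => -trSym m θ) '' Set.Icc 0 Real.pi)

/-!
Writing `e_j = e^{i(m-2j)θ}` for the eigenvalues of `sym^m[g(θ)]`, the factors `1 - e_j/p` come
in conjugate pairs `j ↔ m - j` and have positive real part, so their arguments cancel and
`-log D(p⁻¹, θ) = ∑ log ‖1 - e_j/p‖`. Since `log ‖1 - w‖ = -Re w + O(‖w‖²)`, this is
`-tr(θ)/p + O(m/p²)` uniformly in `θ`. A maximizer of `-log D` (a minimizer of `D`) and a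
maximizer of `-tr/p` then have maximal values within the same uniform error.
-/

open ComplexConjugate

theorem abs_sub_le_of_isMaxOn {α : Type*} {s : Set α} {f g : α → ℝ} {a b : α} {ε : ℝ}
    (ha : a ∈ s) (hb : b ∈ s) (hf : IsMaxOn f s a) (hg : IsMaxOn g s b)
    (hfg : ∀ x ∈ s, |f x - g x| ≤ ε) : |f a - g b| ≤ ε := by
  have hfa := abs_le.mp (hfg a ha)
  have hfb := abs_le.mp (hfg b hb)
  have hfab : f b ≤ f a := hf hb
  have hgab : g a ≤ g b := hg ha
  exact abs_le.mpr ⟨by linarith, by linarith⟩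

theorem IsMaxOn.sSup_image_eq {α β : Type*} [ConditionallyCompleteLattice β] {s : Set α}
    {f : α → β} {a : α} (ha : a ∈ s)
    (hf : IsMaxOn f s a) : sSup (f '' s) = f a :=
  IsGreatest.csSup_eq ⟨Set.mem_image_of_mem f ha, Set.forall_mem_image.mpr hf⟩

namespace Complex

theorem sum_arg_eq_zero_of_conj_reflect {m : ℕ} {z : ℕ → ℂ} (hre : ∀ j ≤ m, 0 < (z j).re)
    (hconj : ∀ j ≤ m, z (m - j) = conj (z j)) : ∑ j ∈ range (m + 1), (z j).arg = 0 := by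
  have harg : ∀ j ∈ range (m + 1), (z (m - j)).arg = -(z j).arg := by
    intro j hj
    have hjm : j ≤ m := Nat.lt_succ_iff.mp (mem_range.mp hj)
    have hpi : (z j).arg ≠ Real.pi := fun h =>
      (hre j hjm).not_gt (arg_eq_pi_iff.mp h).1
    rw [hconj j hjm, arg_conj, if_neg hpi]
  have hreflect := sum_range_reflect (fun j => (z j).arg) (m + 1)
  simp only [add_tsub_cancel_right] at hreflect
  rw [sum_congr rfl harg, sum_neg_distrib] at hreflect
  linarith

theorem prod_eq_ofReal_prod_norm_of_conj_reflect {m : ℕ} {z : ℕ → ℂ}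
    (hre : ∀ j ≤ m, 0 < (z j).re) (hconj : ∀ j ≤ m, z (m - j) = conj (z j)) :
    ∏ j ∈ range (m + 1), z j = ((∏ j ∈ range (m + 1), ‖z j‖ : ℝ) : ℂ) := by
  calc ∏ j ∈ range (m + 1), z j
      = ∏ j ∈ range (m + 1), ((‖z j‖ : ℂ) * exp ((z j).arg * I)) :=
        prod_congr rfl fun j _ => (norm_mul_exp_arg_mul_I (z j)).symm
    _ = (∏ j ∈ range (m + 1), ‖z j‖ : ℝ) * exp ((∑ j ∈ range (m + 1), (z j).arg : ℝ) * I) := by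
        rw [prod_mul_distrib, ← exp_sum, ← sum_mul]
        push_cast
        rfl
    _ = _ := by rw [sum_arg_eq_zero_of_conj_reflect hre hconj]; simp

theorem abs_log_norm_one_sub_add_re_le {w : ℂ} (hw : ‖w‖ ≤ 1 / 2) :
    |Real.log ‖1 - w‖ + w.re| ≤ ‖w‖ ^ 2 := by
  have hlog := norm_log_one_add_sub_self_le (z := -w) (by rw [norm_neg]; linarith)
  rw [norm_neg, ← sub_eq_add_neg, sub_neg_eq_add] at hlog
  have hre : (log (1 - w) + w).re = Real.log ‖1 - w‖ + w.re := by rw [add_re, log_re]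
  have hfactor : (1 - ‖w‖)⁻¹ / 2 ≤ 1 := by
    rw [div_le_one two_pos, inv_le_comm₀ (by linarith) two_pos]
    linarith
  calc |Real.log ‖1 - w‖ + w.re| ≤ ‖log (1 - w) + w‖ := hre ▸ abs_re_le_norm _
    _ ≤ ‖w‖ ^ 2 * ((1 - ‖w‖)⁻¹ / 2) := by rw [← mul_div_assoc]; exact hlog
    _ ≤ ‖w‖ ^ 2 := mul_le_of_le_one_right (sq_nonneg _) hfactor

end Complex

noncomputable def symEigen (m : ℕ) (θ : ℝ) (j : ℕ) : ℂ :=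
  Complex.exp (Complex.I * ((((m : ℝ) - 2 * (j : ℝ)) * θ : ℝ) : ℂ))

section SymPower

variable {m p : ℕ} {θ : ℝ}

theorem norm_symEigen (j : ℕ) : ‖symEigen m θ j‖ = 1 := by
  rw [symEigen, mul_comm, Complex.norm_exp_ofReal_mul_I]

theorem symEigen_re (j : ℕ) : (symEigen m θ j).re = Real.cos (((m : ℝ) - 2 * j) * θ) := by
  rw [symEigen, mul_comm, Complex.exp_ofReal_mul_I_re]

theorem symEigen_sub_eq_conj {j : ℕ} (hj : j ≤ m) :
    symEigen m θ (m - j) = conj (symEigen m θ j) := by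
  rw [symEigen, symEigen, ← Complex.exp_conj, map_mul, Complex.conj_I, Complex.conj_ofReal,
    Nat.cast_sub hj]
  push_cast
  ring_nf

theorem trSym_eq_sum_re (m : ℕ) (θ : ℝ) :
    trSym m θ = ∑ j ∈ range (m + 1), (symEigen m θ j).re := by
  simp only [trSym, symEigen_re]

theorem norm_symEigen_mul_inv (p : ℕ) (j : ℕ) :
    ‖symEigen m θ j * (p : ℂ)⁻¹‖ = (p : ℝ)⁻¹ := by
  rw [norm_mul, norm_symEigen, one_mul, norm_inv, Complex.norm_natCast]

theorem re_one_sub_symEigen_mul_inv_pos (hp : 1 < p) (j : ℕ) :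
    0 < (1 - symEigen m θ j * (p : ℂ)⁻¹).re := by
  have hp' : (1 : ℝ) < p := by exact_mod_cast hp
  have := (Complex.re_le_norm _).trans_eq (norm_symEigen_mul_inv (m := m) (θ := θ) p j)
  rw [Complex.sub_re, Complex.one_re]
  linarith [inv_lt_one_of_one_lt₀ hp']

theorem norm_one_sub_symEigen_mul_inv_pos (hp : 1 < p) (j : ℕ) :
    0 < ‖1 - symEigen m θ j * (p : ℂ)⁻¹‖ :=
  (re_one_sub_symEigen_mul_inv_pos hp j).trans_le (Complex.re_le_norm _)

theorem DvalP_eq_inv_prod_norm (hp : 1 < p) (θ : ℝ) :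
    DvalP m p θ = (∏ j ∈ range (m + 1), ‖1 - symEigen m θ j * (p : ℂ)⁻¹‖)⁻¹ := by
  have hconj : ∀ j ≤ m, 1 - symEigen m θ (m - j) * (p : ℂ)⁻¹
      = conj (1 - symEigen m θ j * (p : ℂ)⁻¹) := fun j hj => by
    rw [symEigen_sub_eq_conj hj]
    simp
  rw [DvalP, prod_inv_distrib]
  change (∏ j ∈ range (m + 1), (1 - symEigen m θ j * (p : ℂ)⁻¹))⁻¹.re = _
  rw [Complex.prod_eq_ofReal_prod_norm_of_conj_reflect
      (fun j _ => re_one_sub_symEigen_mul_inv_pos hp j) hconj,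
    ← Complex.ofReal_inv, Complex.ofReal_re]

theorem DvalP_pos (hp : 1 < p) (θ : ℝ) : 0 < DvalP m p θ := by
  rw [DvalP_eq_inv_prod_norm hp]
  exact inv_pos.mpr (prod_pos fun j _ => norm_one_sub_symEigen_mul_inv_pos hp j)

theorem neg_log_DvalP (hp : 1 < p) (θ : ℝ) :
    -Real.log (DvalP m p θ) = ∑ j ∈ range (m + 1), Real.log ‖1 - symEigen m θ j * (p : ℂ)⁻¹‖ := by
  rw [DvalP_eq_inv_prod_norm hp, Real.log_inv, neg_neg,
    Real.log_prod fun j _ => (norm_one_sub_symEigen_mul_inv_pos hp j).ne']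

theorem abs_neg_log_DvalP_sub_le (hp : 2 ≤ p) (θ : ℝ) :
    |-Real.log (DvalP m p θ) - -trSym m θ / p| ≤ (m + 1) / (p : ℝ) ^ 2 := by
  have hp' : (2 : ℝ) ≤ p := by exact_mod_cast hp
  have hsmall : ∀ j, ‖symEigen m θ j * (p : ℂ)⁻¹‖ ≤ 1 / 2 := fun j => by
    rw [norm_symEigen_mul_inv, one_div]
    exact inv_anti₀ two_pos hp'
  have hre : ∀ j, (symEigen m θ j * (p : ℂ)⁻¹).re = (symEigen m θ j).re / p := fun j => by
    rw [← Complex.ofReal_natCast, ← Complex.ofReal_inv, Complex.re_mul_ofReal, div_eq_mul_inv]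
  rw [neg_log_DvalP (by omega), trSym_eq_sum_re, neg_div, sub_neg_eq_add, sum_div, ← sum_add_distrib]
  calc _ ≤ ∑ j ∈ range (m + 1), ‖symEigen m θ j * (p : ℂ)⁻¹‖ ^ 2 := by
        refine (abs_sum_le_sum_abs _ _).trans (sum_le_sum fun j _ => ?_)
        rw [← hre]
        exact Complex.abs_log_norm_one_sub_add_re_le (hsmall j)
    _ = (m + 1) / (p : ℝ) ^ 2 := by
        simp only [norm_symEigen_mul_inv, sum_const, card_range, nsmul_eq_mul]
        push_cast
        ring

end SymPower

theorem continuous_trSym (m : ℕ) : Continuous (trSym m) :=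
  continuous_finsetSum _ fun _ _ => Real.continuous_cos.comp (continuous_const.mul continuous_id)

theorem exists_isMaxOn_neg_trSym (m : ℕ) :
    ∃ θ ∈ Set.Icc 0 Real.pi, IsMaxOn (fun θ => -trSym m θ) (Set.Icc 0 Real.pi) θ :=
  isCompact_Icc.exists_isMaxOn (Set.nonempty_Icc.mpr Real.pi_pos.le)
    (continuous_trSym m).neg.continuousOn

theorem minimizer_log_euler_factor_general (m : ℕ) (θm : ℕ → ℝ)
    (hθm : ∀ p : ℕ, p.Prime →
      θm p ∈ Set.Icc 0 Real.pi ∧ IsMinOn (DvalP m p) (Set.Icc 0 Real.pi) (θm p)) :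
    ∃ C : ℝ, ∀ p : ℕ, p.Prime →
      |(-Real.log (DvalP m p (θm p))) - Aminus m / p| ≤ C / (p : ℝ) ^ 2 := by
  obtain ⟨θmax, hθmax, htr⟩ := exists_isMaxOn_neg_trSym m
  refine ⟨m + 1, fun p hp => ?_⟩
  obtain ⟨hθp, hmin⟩ := hθm p hp
  have hneg_log : IsMaxOn (fun θ => -Real.log (DvalP m p θ)) (Set.Icc 0 Real.pi) (θm p) :=
    fun θ hθ => neg_le_neg (Real.log_le_log (DvalP_pos hp.one_lt _) (hmin hθ))
  have htr_div : IsMaxOn (fun θ => -trSym m θ / p) (Set.Icc 0 Real.pi) θmax :=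
    fun θ hθ => div_le_div_of_nonneg_right (htr hθ) (Nat.cast_nonneg (α := ℝ) p)
  rw [Aminus, htr.sSup_image_eq hθmax]
  exact (abs_sub_le_of_isMaxOn hθp hθmax hneg_log htr_div fun θ _ =>
    abs_neg_log_DvalP_sub_le hp.two_le θ :)

/-- If for each prime `p`, `θ⁻_{m,p} ∈ [0,π]` minimizes `θ ↦ D(p⁻¹, sym^m[g(θ)])`
on `[0,π]`, then `−log D(p⁻¹, sym^m[g(θ⁻_{m,p})]) − A_m⁻ / p = O_m(p⁻²)`. -/
theorem minimizer_log_euler_factor (m : ℕ) (hm : 1 ≤ m) (θm : ℕ → ℝ)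
    (hθm : ∀ p : ℕ, p.Prime →
      θm p ∈ Set.Icc 0 Real.pi ∧ IsMinOn (DvalP m p) (Set.Icc 0 Real.pi) (θm p)) :
    ∃ C : ℝ, ∀ p : ℕ, p.Prime →
      |(-Real.log (DvalP m p (θm p))) - Aminus m / p| ≤ C / (p : ℝ) ^ 2 :=
  minimizer_log_euler_factor_general m θm hθm
end

section
/- If F is holomorphic on |s − s'| ≤ R', Re F(s) ≤ M on |s − s'| = R', and 0 < r' < R', then max_{|s−s'|=r'} |F(s)| ≤ (2r'/(R'−r')) M + ((R'+r')/(R'−r')) |F(s')|. -/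
open Metric Set

/-- Maximum principle for the real part: if `F` is holomorphic on the closed ball and
`Re F ≤ M` on the boundary sphere, then `Re F ≤ M` on the whole closed ball. -/
lemma re_le_of_forall_sphere_re_le (F : ℂ → ℂ) (s' : ℂ) (R' M : ℝ) (hR' : 0 < R')
    (hF : DifferentiableOn ℂ F (Metric.closedBall s' R'))
    (hRe : ∀ s : ℂ, ‖s - s'‖ = R' → (F s).re ≤ M) :
    ∀ z ∈ Metric.closedBall s' R', (F z).re ≤ M := by
  intro z hz
  have hd : DiffContOnCl ℂ (fun w => Complex.exp (F w)) (ball s' R') := by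
    refine DifferentiableOn.diffContOnCl ?_
    rw [closure_ball s' hR'.ne']
    exact hF.cexp
  have hb : ∀ w ∈ frontier (ball s' R'), ‖Complex.exp (F w)‖ ≤ Real.exp M := by
    intro w hw
    rw [frontier_ball s' hR'.ne', mem_sphere_iff_norm] at hw
    rw [Complex.norm_exp]
    exact Real.exp_le_exp.2 (hRe w hw)
  have hcl : z ∈ closure (ball s' R') := by
    rwa [closure_ball s' hR'.ne']
  have := Complex.norm_le_of_forall_mem_frontier_norm_le isBounded_ball hd hb hcl
  rw [Complex.norm_exp, Real.exp_le_exp] at this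
  exact this

/-- Borel–Carathéodory: if `F` is holomorphic on the closed disk `|s − s'| ≤ R'`,
`Re F ≤ M` on the boundary circle, and `0 < r' < R'`, then on the circle `|s − s'| = r'`
one has `|F(s)| ≤ (2r'/(R'−r')) M + ((R'+r')/(R'−r')) |F(s')|`. -/
theorem borel_caratheodory (F : ℂ → ℂ) (s' : ℂ) (R' r' M : ℝ)
    (hr : 0 < r') (hrR : r' < R')
    (hF : DifferentiableOn ℂ F (Metric.closedBall s' R'))
    (hRe : ∀ s : ℂ, ‖s - s'‖ = R' → (F s).re ≤ M) :
    ∀ s : ℂ, ‖s - s'‖ = r' →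
      ‖F s‖ ≤ (2 * r' / (R' - r')) * M + ((R' + r') / (R' - r')) * ‖F s'‖ := by
  intro s hs
  have hR' : (0:ℝ) < R' := hr.trans hrR
  have hRr : (0:ℝ) < R' - r' := by linarith
  have hReAll := re_le_of_forall_sphere_re_le F s' R' M hR' hF hRe
  have hs'mem : s' ∈ closedBall s' R' := mem_closedBall_self hR'.le
  have hsball : s ∈ ball s' R' := by
    rw [mem_ball, dist_eq_norm, hs]; exact hrR
  have hsubset : ball s' R' ⊆ closedBall s' R' := ball_subset_closedBall
  have hre0 : (F s').re ≤ M := hReAll s' hs'mem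
  -- prove the bound with a slack ε > 0, then pass to the limit
  have key : ∀ ε : ℝ, 0 < ε →
      ‖F s‖ ≤ (2 * r' / (R' - r')) * M + ((R' + r') / (R' - r')) * ‖F s'‖
        + 2 * r' / (R' - r') * ε := by
    intro ε hε
    set a : ℝ := M + ε - (F s').re with ha_def
    have ha : 0 < a := by simp only [ha_def]; linarith
    set f : ℂ → ℂ := fun z => F z - F s' with hf_def
    set den : ℂ → ℂ := fun z => ((2 * a : ℝ) : ℂ) - f z with hden_def
    have hre_f : ∀ z ∈ closedBall s' R', (f z).re ≤ a - ε := by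
      intro z hz
      have := hReAll z hz
      simp only [hf_def, Complex.sub_re, ha_def]
      linarith
    have hden_re : ∀ z ∈ closedBall s' R', 0 < (den z).re := by
      intro z hz
      have h1 := hre_f z hz
      simp only [hden_def, Complex.sub_re, Complex.ofReal_re]
      linarith
    have hden_ne : ∀ z ∈ closedBall s' R', den z ≠ 0 := by
      intro z hz h0
      have := hden_re z hz
      rw [h0] at this
      simp at this
    have hlt : ∀ z ∈ closedBall s' R', ‖f z‖ < ‖den z‖ := by
      intro z hz
      have h1 := hre_f z hz
      have hsq : ‖f z‖ ^ 2 < ‖den z‖ ^ 2 := by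
        rw [Complex.sq_norm, Complex.sq_norm]
        simp only [hden_def, Complex.normSq_apply, Complex.sub_re, Complex.sub_im,
          Complex.ofReal_re, Complex.ofReal_im]
        nlinarith [mul_pos ha hε]
      exact lt_of_pow_lt_pow_left₀ 2 (norm_nonneg _) hsq
    -- the auxiliary map g
    set g : ℂ → ℂ := fun z => f z / den z with hg_def
    have hg_diff : DifferentiableOn ℂ g (ball s' R') := by
      refine DifferentiableOn.div ?_ ?_ ?_
      · exact (hF.sub (differentiableOn_const _)).mono hsubset
      · exact ((differentiableOn_const _).sub
          (hF.sub (differentiableOn_const _))).mono hsubset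
      · intro z hz; exact hden_ne z (hsubset hz)
    have hg0 : g s' = 0 := by
      simp [hg_def, hf_def]
    have hmaps : MapsTo g (ball s' R') (ball (g s') 1) := by
      intro z hz
      rw [hg0, mem_ball, dist_zero_right, hg_def]
      rw [norm_div]
      have h2 := hlt z (hsubset hz)
      have h3 : (0:ℝ) < ‖den z‖ := lt_of_le_of_lt (norm_nonneg _) h2
      rw [div_lt_one h3]
      exact h2
    have hschwarz := Complex.dist_le_div_mul_dist_of_mapsTo_ball hg_diff (hmaps.mono_right ball_subset_closedBall) hsball
    rw [hg0, dist_zero_right, dist_eq_norm, hs] at hschwarz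
    -- ‖g s‖ ≤ (1/R') * r'
    have hden_bound : ‖den s‖ ≤ 2 * a + ‖f s‖ := by
      calc ‖den s‖ ≤ ‖((2 * a : ℝ) : ℂ)‖ + ‖f s‖ := norm_sub_le _ _
        _ = 2 * a + ‖f s‖ := by
            rw [Complex.norm_real, Real.norm_eq_abs,
              abs_of_pos (by positivity : (0:ℝ) < 2 * a)]
    have hfs : ‖f s‖ ≤ 2 * a * r' / (R' - r') := by
      have h4 : ‖f s‖ = ‖g s‖ * ‖den s‖ := by
        rw [hg_def]
        rw [norm_div, div_mul_cancel₀]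
        exact fun h0 => hden_ne s (hsubset hsball) (norm_eq_zero.mp h0)
      have hgs : R' * ‖g s‖ ≤ r' := by
        have h5 := mul_le_mul_of_nonneg_left hschwarz hR'.le
        have h6 : R' * (1 / R' * r') = r' := by field_simp
        linarith
      have h7 : R' * ‖f s‖ ≤ r' * (2 * a + ‖f s‖) := by
        calc R' * ‖f s‖ = (R' * ‖g s‖) * ‖den s‖ := by rw [h4]; ring
          _ ≤ r' * ‖den s‖ := by
              exact mul_le_mul_of_nonneg_right hgs (norm_nonneg _)
          _ ≤ r' * (2 * a + ‖f s‖) :=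
              mul_le_mul_of_nonneg_left hden_bound hr.le
      rw [le_div_iff₀ hRr]
      nlinarith [norm_nonneg (f s)]
    -- conclude
    have hF_bound : ‖F s‖ ≤ ‖f s‖ + ‖F s'‖ := by
      calc ‖F s‖ = ‖f s + F s'‖ := by rw [hf_def]; ring_nf
        _ ≤ ‖f s‖ + ‖F s'‖ := norm_add_le _ _
    have hre_ge : -(‖F s'‖) ≤ (F s').re := by
      have := Complex.abs_re_le_norm (F s')
      cases abs_le.mp this with
      | intro h1 h2 => linarith
    have ha_le : a ≤ M + ε + ‖F s'‖ := by simp only [ha_def]; linarith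
    have h9 : ‖f s‖ ≤ 2 * (M + ε + ‖F s'‖) * r' / (R' - r') := by
      refine le_trans hfs ?_
      rw [div_le_div_iff_of_pos_right hRr]
      nlinarith
    calc ‖F s‖ ≤ ‖f s‖ + ‖F s'‖ := hF_bound
      _ ≤ 2 * (M + ε + ‖F s'‖) * r' / (R' - r') + ‖F s'‖ := by linarith
      _ = (2 * r' / (R' - r')) * M + ((R' + r') / (R' - r')) * ‖F s'‖
          + 2 * r' / (R' - r') * ε := by field_simp; ring
  refine le_of_forall_pos_le_add ?_
  intro δ hδ
  have hε : 0 < δ * (R' - r') / (2 * r') := by positivity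
  have := key _ hε
  have heq : 2 * r' / (R' - r') * (δ * (R' - r') / (2 * r')) = δ := by
    field_simp
  linarith [this, heq.le, heq.ge]
end
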